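/- Let (A, δ_A, ε_A) and (B, δ_B, ε_B) be cocommutative comonoid objects in a braided monoidal category, i.e. δ_A ≫ β_{A,A} = δ_A and δ_B ≫ β_{B,B} = δ_B, and let δ_× : A ⊗ B ⟶ (A ⊗ B) ⊗ (A ⊗ B) be the braided-product comultiplication. Then for every morphism q : A ⊗ B ⟶ 𝟙, one has δ_× ≫ (q ⊗ id_{A⊗B}) ≫ λ_{A⊗B} = δ_× ≫ (id_{A⊗B} ⊗ q) ≫ ρ_{A⊗B}. (This is the condition q x = θ(q) x characterizing central elements; it shows that for the braided product of two commutative Q-systems, i.e. two local extensions, the entire relative commutant coincides with the centre.) -/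

import Mathlib

/-!
Write `δ_× = (δ_A ⊗ δ_B) ≫ tensorμ`. By cocommutativity of `A` one may insert the monodromy
`β_{A,A} ≫ β_{A,A}` in front of `tensorμ`; this converts the crossing `β_{A,B}` of `tensorμ` into
the reversed crossing of `tensorδ`, up to a monodromy of the first tensor factor which a morphism
`q` into the unit cannot see. Sliding `q` across the braiding `β_{A⊗B,A⊗B}` and untangling
`tensorδ ≫ β` as `(β_{A,A} ⊗ β_{B,B}) ≫ tensorμ`, cocommutativity of both factors gives back `δ_×`.
-/

open CategoryTheory MonoidalCategory

variable {C : Type*} [Category C] [MonoidalCategory C] [BraidedCategory C]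

/-- The braided-product comultiplication on `A ⊗ B` built from comultiplications
`δ_A` and `δ_B`: apply `δ_A ⊗ δ_B`, rebracket via the associator, and apply
`id_A ⊗ β_{A,B} ⊗ id_B` to the middle factors `A ⊗ B`. -/
noncomputable def bpComul {A B : C} (dA : A ⟶ A ⊗ A) (dB : B ⟶ B ⊗ B) :
    A ⊗ B ⟶ (A ⊗ B) ⊗ (A ⊗ B) :=
  (dA ⊗ₘ dB) ≫
    (α_ A A (B ⊗ B)).hom ≫
    (A ◁ (α_ A B B).inv) ≫
    (A ◁ ((β_ A B).hom ▷ B)) ≫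
    (A ◁ (α_ B A B).hom) ≫
    (α_ A B (A ⊗ B)).inv

namespace CategoryTheory.MonoidalCategory

open BraidedCategory

def monodromy (X Y : C) : X ⊗ Y ⟶ X ⊗ Y := (β_ X Y).hom ≫ (β_ Y X).hom

lemma tensorδ_comp_braiding (W X Y Z : C) :
    tensorδ W X Y Z ≫ (β_ (W ⊗ X) (Y ⊗ Z)).hom =
      ((β_ W Y).hom ⊗ₘ (β_ X Z).hom) ≫ tensorμ Y W Z X := by
  simp [tensorδ, tensorμ, braiding_tensor_left_hom, braiding_tensor_right_hom, tensorHom_def]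

lemma tensorδ_comp_monodromy (W X Y Z : C) :
    tensorδ W X Y Z ≫ (α_ (W ⊗ X) Y Z).inv ≫ (monodromy (W ⊗ X) Y ▷ Z) =
      (monodromy W Y ▷ (X ⊗ Z)) ≫ tensorμ W Y X Z ≫ (α_ (W ⊗ X) Y Z).inv := by
  simp [monodromy, tensorδ, tensorμ, braiding_tensor_left_hom, braiding_tensor_right_hom]

lemma monodromy_comp_whiskerRight_of_unit {X : C} (f : X ⟶ 𝟙_ C) (Y : C) :
    monodromy X Y ≫ (f ▷ Y) = f ▷ Y := by
  rw [monodromy, Category.assoc, ← braiding_naturality_right, ← braiding_naturality_left_assoc]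
  simp

lemma whiskerRight_comp_leftUnitor_of_unit {X : C} (f : X ⟶ 𝟙_ C) (Y : C) :
    (f ▷ Y) ≫ (λ_ Y).hom = (β_ X Y).hom ≫ (Y ◁ f) ≫ (ρ_ Y).hom := by
  rw [← braiding_naturality_left_assoc, braiding_rightUnitor]

lemma tensorμ_comp_whiskerRight_of_unit {W X Y Z : C} (q : W ⊗ X ⟶ 𝟙_ C) :
    (monodromy W Y ▷ (X ⊗ Z)) ≫ tensorμ W Y X Z ≫ (q ▷ (Y ⊗ Z)) =
      tensorδ W X Y Z ≫ (q ▷ (Y ⊗ Z)) := by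
  rw [whiskerRight_tensor q, ← reassoc_of% (tensorδ_comp_monodromy W X Y Z),
    ← comp_whiskerRight_assoc, monodromy_comp_whiskerRight_of_unit]

end CategoryTheory.MonoidalCategory

lemma bpComul_eq_tensorHom_comp_tensorμ {A B : C} (dA : A ⟶ A ⊗ A) (dB : B ⟶ B ⊗ B) :
    bpComul dA dB = (dA ⊗ₘ dB) ≫ tensorμ A A B B := rfl

theorem relativeCommutant_eq_centre_of_cocommutative_general
    {A B : C} (dA : A ⟶ A ⊗ A) (dB : B ⟶ B ⊗ B)
    (cocommA : dA ≫ (β_ A A).hom = dA)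
    (cocommB : dB ≫ (β_ B B).hom = dB)
    (q : A ⊗ B ⟶ 𝟙_ C) :
    bpComul dA dB ≫ (q ⊗ₘ 𝟙 (A ⊗ B)) ≫ (λ_ (A ⊗ B)).hom =
      bpComul dA dB ≫ (𝟙 (A ⊗ B) ⊗ₘ q) ≫ (ρ_ (A ⊗ B)).hom := by
  have monodromyA : (dA ⊗ₘ dB) ≫ (monodromy A A ▷ (B ⊗ B)) = dA ⊗ₘ dB := by
    rw [monodromy, tensorHom_comp_whiskerRight, reassoc_of% cocommA, cocommA]
  have braidAB : (dA ⊗ₘ dB) ≫ ((β_ A A).hom ⊗ₘ (β_ B B).hom) = dA ⊗ₘ dB := by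
    rw [tensorHom_comp_tensorHom, cocommA, cocommB]
  rw [tensorHom_id, id_tensorHom, bpComul_eq_tensorHom_comp_tensorμ, Category.assoc,
    Category.assoc]
  calc (dA ⊗ₘ dB) ≫ tensorμ A A B B ≫ (q ▷ (A ⊗ B)) ≫ (λ_ (A ⊗ B)).hom
      = (dA ⊗ₘ dB) ≫ tensorδ A B A B ≫ (q ▷ (A ⊗ B)) ≫ (λ_ (A ⊗ B)).hom := by
        rw [← reassoc_of% (tensorμ_comp_whiskerRight_of_unit q), reassoc_of% monodromyA]
    _ = (dA ⊗ₘ dB) ≫ tensorμ A A B B ≫ ((A ⊗ B) ◁ q) ≫ (ρ_ (A ⊗ B)).hom := by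
        rw [whiskerRight_comp_leftUnitor_of_unit, reassoc_of% (tensorδ_comp_braiding A B A B),
          reassoc_of% braidAB]

/-- For cocommutative comonoid objects `(A, δ_A, ε_A)` and `(B, δ_B, ε_B)` in a braided
monoidal category, and the braided-product comultiplication `δ_×` on `A ⊗ B`, every
morphism `q : A ⊗ B ⟶ 𝟙` satisfies
`δ_× ≫ (q ⊗ id) ≫ λ = δ_× ≫ (id ⊗ q) ≫ ρ`.  This is the condition `q x = θ(q) x`
characterizing central elements: for the braided product of two commutative Q-systems
(two local extensions) the entire relative commutant coincides with the centre. -/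
theorem relativeCommutant_eq_centre_of_cocommutative
    {A B : C} (dA : A ⟶ A ⊗ A) (eA : A ⟶ 𝟙_ C) (dB : B ⟶ B ⊗ B) (eB : B ⟶ 𝟙_ C)
    (coassocA : dA ≫ (dA ⊗ₘ 𝟙 A) ≫ (α_ A A A).hom = dA ≫ (𝟙 A ⊗ₘ dA))
    (counitA_left : dA ≫ (eA ⊗ₘ 𝟙 A) = (λ_ A).inv)
    (counitA_right : dA ≫ (𝟙 A ⊗ₘ eA) = (ρ_ A).inv)
    (cocommA : dA ≫ (β_ A A).hom = dA)
    (coassocB : dB ≫ (dB ⊗ₘ 𝟙 B) ≫ (α_ B B B).hom = dB ≫ (𝟙 B ⊗ₘ dB))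
    (counitB_left : dB ≫ (eB ⊗ₘ 𝟙 B) = (λ_ B).inv)
    (counitB_right : dB ≫ (𝟙 B ⊗ₘ eB) = (ρ_ B).inv)
    (cocommB : dB ≫ (β_ B B).hom = dB)
    (q : A ⊗ B ⟶ 𝟙_ C) :
    bpComul dA dB ≫ (q ⊗ₘ 𝟙 (A ⊗ B)) ≫ (λ_ (A ⊗ B)).hom =
      bpComul dA dB ≫ (𝟙 (A ⊗ B) ⊗ₘ q) ≫ (ρ_ (A ⊗ B)).hom :=
  relativeCommutant_eq_centre_of_cocommutative_general dA dB cocommA cocommB q
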